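/- Let F = ⟨W,R⟩ be a frame and F^m = ⟨W,R^m⟩ a mirror reduction of F (i.e., R^m ⊆ R and R \ R^m consists only of reflexive pairs ⟨x,x⟩). Then for any valuation V, any state x ∈ W, and any formula α of the language L∘, the model ⟨F,V⟩ satisfies α at x under the reflexive-insensitive semantics iff ⟨F^m,V⟩ satisfies α at x. -/
import Mathlib


/-- Formulas of the language L∘. -/
inductive RIForm : Type where
  | var : Nat → RIForm
  | neg : RIForm → RIForm
  | and : RIForm → RIForm → RIForm
  | circ : RIForm → RIForm
deriving DecidableEq

def RIForm.imp (φ ψ : RIForm) : RIForm := .neg (.and φ (.neg ψ))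
def RIForm.or (φ ψ : RIForm) : RIForm := .neg (.and (.neg φ) (.neg ψ))
def RIForm.top : RIForm := .neg (.and (.var 0) (.neg (.var 0)))
def RIForm.bot : RIForm := .and (.var 0) (.neg (.var 0))
def RIForm.iff (φ ψ : RIForm) : RIForm := .and (φ.imp ψ) (ψ.imp φ)

/-- Reflexive-insensitive satisfaction. -/
def riSat {W : Type} (R : W → W → Prop) (V : Nat → W → Prop) : W → RIForm → Prop
  | w, .var p => V p w
  | w, .neg φ => ¬ riSat R V w φ
  | w, .and φ ψ => riSat R V w φ ∧ riSat R V w ψ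
  | w, .circ φ => ¬ riSat R V w φ ∨ ∀ x, R w x → riSat R V x φ

/-- Validity on a frame under the reflexive-insensitive semantics. -/
def riValid {W : Type} (R : W → W → Prop) (φ : RIForm) : Prop :=
  ∀ V w, riSat R V w φ

theorem mirror_reduction_sat {W : Type} (R Rm : W → W → Prop)
    (hsub : ∀ x y, Rm x y → R x y)
    (hrefl : ∀ x y, R x y → ¬ Rm x y → x = y)
    (V : Nat → W → Prop) (x : W) (α : RIForm) :
    riSat R V x α ↔ riSat Rm V x α := by
  induction α generalizing x with
  | var p => rfl
  | neg φ ih => simp [riSat, ih]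
  | and φ ψ ih1 ih2 => simp [riSat, ih1, ih2]
  | circ φ ih =>
    simp only [riSat, ih]
    constructor
    · rintro (h | h)
      · exact Or.inl h
      · exact Or.inr fun y hy => h y (hsub x y hy)
    · rintro (h | h)
      · exact Or.inl h
      · by_cases hx : riSat Rm V x φ
        · refine Or.inr fun y hy => ?_
          by_cases hm : Rm x y
          · exact h y hm
          · exact hrefl x y hy hm ▸ hx
        · exact Or.inl hx
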